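/- arXiv:1312.1717 — 7 statements merged into one kernel-verified Lean document; each statement's English description precedes it below -/
import Mathlib

section
/- Let G and U be closed subspaces of a Hilbert space H with cos(φ_{GU}) > 0. Then the subspace P_U(G) = {P_U g : g ∈ G} is closed in H. -/
/-! The cosine bound says that `P_U` is bounded below on `G`: `‖P_U g‖ ≥ cos(φ_{GU}) ‖g‖`.
A bounded-below operator on the complete space `G` is antilipschitz, so its range `P_U(G)` is
closed. -/

open Submodule

/-- `cos(φ_{GU}) = inf over unit vectors g ∈ G of ‖P_U g‖`. -/
noncomputable def cosAngle {H : Type*} [NormedAddCommGroup H] [InnerProductSpace ℝ H]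
    (S V : Submodule ℝ H) [CompleteSpace V] : ℝ :=
  sInf {r : ℝ | ∃ s ∈ S, ‖s‖ = 1 ∧ r = ‖(orthogonalProjection V s : H)‖}

theorem ContinuousLinearMap.isClosed_range_of_mul_norm_le {𝕜 E F : Type*}
    [NontriviallyNormedField 𝕜] [NormedAddCommGroup E] [NormedSpace 𝕜 E] [CompleteSpace E]
    [NormedAddCommGroup F] [NormedSpace 𝕜 F] (f : E →L[𝕜] F) {c : ℝ} (hc : 0 < c)
    (hf : ∀ x, c * ‖x‖ ≤ ‖f x‖) : IsClosed (Set.range f) := by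
  have hanti : AntilipschitzWith c.toNNReal⁻¹ f :=
    f.antilipschitz_of_bound fun x => by
      rw [NNReal.coe_inv, Real.coe_toNNReal _ hc.le, le_inv_mul_iff₀ hc]
      exact hf x
  exact hanti.isClosed_range f.uniformContinuous

theorem cosAngle_mul_norm_le {H : Type*} [NormedAddCommGroup H] [InnerProductSpace ℝ H]
    (S V : Submodule ℝ H) [CompleteSpace V] {s : H} (hs : s ∈ S) :
    cosAngle S V * ‖s‖ ≤ ‖(V.orthogonalProjectionOnto s : H)‖ := by
  rcases eq_or_ne s 0 with rfl | hs0
  · simp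
  have hpos : 0 < ‖s‖ := norm_pos_iff.mpr hs0
  have hbdd :
      BddBelow {r : ℝ | ∃ s ∈ S, ‖s‖ = 1 ∧ r = ‖(V.orthogonalProjectionOnto s : H)‖} :=
    ⟨0, by rintro r ⟨s, -, -, rfl⟩; exact norm_nonneg _⟩
  have hunit : ‖‖s‖⁻¹ • s‖ = 1 := by
    rw [norm_smul, norm_inv, norm_norm, inv_mul_cancel₀ hpos.ne']
  have hle : cosAngle S V ≤ ‖s‖⁻¹ * ‖(V.orthogonalProjectionOnto s : H)‖ := by
    refine (csInf_le hbdd ⟨_, S.smul_mem _ hs, hunit, rfl⟩).trans_eq ?_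
    rw [map_smul, Submodule.coe_smul, norm_smul, norm_inv, norm_norm]
  rwa [le_inv_mul_iff₀ hpos, mul_comm] at hle

theorem stmt2_general {H : Type*} [NormedAddCommGroup H] [InnerProductSpace ℝ H]
    (G U : Submodule ℝ H) [CompleteSpace G] [CompleteSpace U]
    (hcos : 0 < cosAngle G U) :
    IsClosed ((G.map ((U.subtypeL.comp (orthogonalProjection U)).toLinearMap) :
      Submodule ℝ H) : Set H) := by
  set P : H →L[ℝ] H := U.starProjection
  change IsClosed ((G.map P.toLinearMap : Submodule ℝ H) : Set H)
  have hrange :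
      ((G.map P.toLinearMap : Submodule ℝ H) : Set H) = Set.range (P ∘L G.subtypeL) := by
    rw [Submodule.map_coe, Set.image_eq_range]
    rfl
  rw [hrange]
  exact (P ∘L G.subtypeL).isClosed_range_of_mul_norm_le hcos fun g => cosAngle_mul_norm_le G U g.2

/-- If `cos(φ_{GU}) > 0` then `P_U(G) = {P_U g : g ∈ G}` is closed. -/
theorem stmt2 {H : Type*} [NormedAddCommGroup H] [InnerProductSpace ℝ H] [CompleteSpace H]
    (G U : Submodule ℝ H) [CompleteSpace G] [CompleteSpace U]
    (hcos : 0 < cosAngle G U) :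
    IsClosed ((G.map ((U.subtypeL.comp (orthogonalProjection U)).toLinearMap) :
      Submodule ℝ H) : Set H) :=
  stmt2_general G U hcos
end

section
/- Let G and U be closed subspaces of a Hilbert space H with cos(φ_{GU}) > 0. Then cos(φ_{G, P_U(G)}) = cos(φ_{GU}), where P_U(G) = {P_U g : g ∈ G}. -/
open Submodule

theorem Submodule.starProjection_eq_of_le_of_mem {𝕜 E : Type*} [RCLike 𝕜] [NormedAddCommGroup E]
    [InnerProductSpace 𝕜 E] {K L : Submodule 𝕜 E} [K.HasOrthogonalProjection]
    [L.HasOrthogonalProjection] (hKL : K ≤ L) {v : E} (hv : L.starProjection v ∈ K) :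
    K.starProjection v = L.starProjection v :=
  eq_starProjection_of_mem_orthogonal hv (orthogonal_le hKL (sub_starProjection_mem_orthogonal v))

theorem cosAngle_congr_right {H : Type*} [NormedAddCommGroup H] [InnerProductSpace ℝ H]
    {S V V' : Submodule ℝ H} [CompleteSpace V] [CompleteSpace V']
    (h : ∀ s ∈ S, V.starProjection s = V'.starProjection s) :
    cosAngle S V = cosAngle S V' := by
  unfold cosAngle
  congr 1
  ext r
  constructor
  · rintro ⟨s, hs, hs1, rfl⟩
    exact ⟨s, hs, hs1, congrArg norm (h s hs)⟩
  · rintro ⟨s, hs, hs1, rfl⟩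
    exact ⟨s, hs, hs1, congrArg norm (h s hs).symm⟩

theorem stmt3_general {H : Type*} [NormedAddCommGroup H] [InnerProductSpace ℝ H]
    (G U : Submodule ℝ H) [CompleteSpace U]
    [CompleteSpace (G.map ((U.subtypeL.comp (orthogonalProjection U)).toLinearMap))] :
    cosAngle G (G.map ((U.subtypeL.comp (orthogonalProjection U)).toLinearMap)) =
      cosAngle G U := by
  set W := G.map ((U.subtypeL.comp (orthogonalProjectionOnto U)).toLinearMap)
  have hWU : W ≤ U := by
    rintro _ ⟨g, -, rfl⟩
    exact starProjection_apply_mem U g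
  exact cosAngle_congr_right fun s hs ↦
    starProjection_eq_of_le_of_mem hWU (mem_map_of_mem hs)

/-- If `cos(φ_{GU}) > 0`, then `cos(φ_{G, P_U(G)}) = cos(φ_{GU})`. -/
theorem stmt3 {H : Type*} [NormedAddCommGroup H] [InnerProductSpace ℝ H] [CompleteSpace H]
    (G U : Submodule ℝ H) [CompleteSpace G] [CompleteSpace U]
    [CompleteSpace (G.map ((U.subtypeL.comp (orthogonalProjection U)).toLinearMap))]
    (hcos : 0 < cosAngle G U) :
    cosAngle G (G.map ((U.subtypeL.comp (orthogonalProjection U)).toLinearMap)) =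
      cosAngle G U :=
  stmt3_general G U
end

section
/- Let G and U be closed subspaces of a Hilbert space H with cos(φ_{GU}) > 0. Then H = G ⊕ P_U(G)^⊥ (direct sum), and the oblique projection P_{G, P_U(G)^⊥} : H → G with range G and kernel P_U(G)^⊥ is well defined and bounded. -/
open Submodule

open scoped RealInnerProductSpace

theorem LinearMap.IsSymmetric.orthogonal_map {𝕜 E : Type*} [RCLike 𝕜] [NormedAddCommGroup E]
    [InnerProductSpace 𝕜 E] {T : E →ₗ[𝕜] E} (hT : T.IsSymmetric) (K : Submodule 𝕜 E) :
    (K.map T)ᗮ = Kᗮ.comap T := by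
  ext x
  simp [mem_orthogonal, hT _ x]

theorem isCoercive_bilinearComp_innerSL {E F : Type*} [SeminormedAddCommGroup E]
    [NormedSpace ℝ E] [NormedAddCommGroup F] [InnerProductSpace ℝ F] (T : E →L[ℝ] F) {c : ℝ}
    (hc : 0 < c) (hT : ∀ x, c * ‖x‖ ≤ ‖T x‖) :
    IsCoercive ((innerSL ℝ).bilinearComp T T) := by
  refine ⟨c * c, mul_pos hc hc, fun x => ?_⟩
  have hx : (innerSL ℝ).bilinearComp T T x x = ‖T x‖ ^ 2 := real_inner_self_eq_norm_sq _
  rw [hx, mul_assoc, mul_mul_mul_comm, ← sq]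
  exact pow_le_pow_left₀ (by positivity) (hT x) 2

section Angle

variable {H : Type*} [NormedAddCommGroup H] [InnerProductSpace ℝ H]
  (G U : Submodule ℝ H) [CompleteSpace U]

theorem inner_starProjection_starProjection (x y : H) :
    ⟪U.starProjection x, U.starProjection y⟫ = ⟪U.starProjection x, y⟫ := by
  rw [inner_starProjection_left_eq_right, starProjection_eq_self_iff.mpr (starProjection_apply_mem U y),
    inner_starProjection_left_eq_right]

theorem cosAngle_mul_norm_le_s4 {g : H} (hg : g ∈ G) :
    cosAngle G U * ‖g‖ ≤ ‖U.starProjection g‖ := by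
  rcases eq_or_ne g 0 with rfl | hg0
  · simp
  have hnorm : 0 < ‖g‖ := norm_pos_iff.mpr hg0
  have hle : cosAngle G U ≤ ‖U.starProjection (‖g‖⁻¹ • g)‖ := by
    refine csInf_le ⟨0, ?_⟩ ⟨_, G.smul_mem _ hg, ?_, rfl⟩
    · rintro r ⟨s, -, -, rfl⟩
      positivity
    · rw [norm_smul, norm_inv, norm_norm, inv_mul_cancel₀ hnorm.ne']
  rw [map_smul, norm_smul, norm_inv, norm_norm, ← div_eq_inv_mul] at hle
  exact (le_div_iff₀ hnorm).mp hle

variable [CompleteSpace G] {G U}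

noncomputable def compressionEquiv (hcos : 0 < cosAngle G U) : G ≃L[ℝ] G :=
  (isCoercive_bilinearComp_innerSL (U.starProjection ∘L G.subtypeL) hcos
    fun g => cosAngle_mul_norm_le_s4 G U g.2).continuousLinearEquivOfBilin

theorem compressionEquiv_apply (hcos : 0 < cosAngle G U) (g : G) :
    compressionEquiv hcos g = G.orthogonalProjectionOnto (U.starProjection g) := by
  refine (IsCoercive.unique_continuousLinearEquivOfBilin _ fun w => ?_).symm
  rw [inner_orthogonalProjectionOnto_eq_of_mem_right]
  exact (inner_starProjection_starProjection U _ _).symm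

noncomputable def obliqueProjectionOnto (hcos : 0 < cosAngle G U) : H →L[ℝ] G :=
  (compressionEquiv hcos).symm.toContinuousLinearMap ∘L G.orthogonalProjectionOnto ∘L
    U.starProjection

theorem obliqueProjectionOnto_apply_coe (hcos : 0 < cosAngle G U) (g : G) :
    obliqueProjectionOnto hcos g = g := by
  simp only [obliqueProjectionOnto, ContinuousLinearMap.comp_apply,
    ContinuousLinearEquiv.coe_coe, ContinuousLinearEquiv.symm_apply_eq, compressionEquiv_apply]

theorem ker_obliqueProjectionOnto (hcos : 0 < cosAngle G U) :
    (obliqueProjectionOnto hcos).ker = (G.map (U.starProjection : H →ₗ[ℝ] H))ᗮ := by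
  ext x
  simp [obliqueProjectionOnto, (U.starProjection_isSymmetric).orthogonal_map,
    orthogonalProjectionOnto_eq_zero_iff]

theorem isTopCompl_orthogonal_map_starProjection (hcos : 0 < cosAngle G U) :
    IsTopCompl G (G.map (U.starProjection : H →ₗ[ℝ] H))ᗮ :=
  ker_obliqueProjectionOnto hcos ▸
    ContinuousLinearMap.isTopCompl_of_proj (obliqueProjectionOnto_apply_coe hcos)

end Angle

theorem stmt4_general {H : Type*} [NormedAddCommGroup H] [InnerProductSpace ℝ H]
    (G U : Submodule ℝ H) [CompleteSpace G] [CompleteSpace U]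
    (hcos : 0 < cosAngle G U) :
    G ⊓ (G.map ((U.subtypeL.comp (orthogonalProjection U)).toLinearMap))ᗮ = ⊥ ∧
    G ⊔ (G.map ((U.subtypeL.comp (orthogonalProjection U)).toLinearMap))ᗮ = ⊤ ∧
    ∃ P : H →L[ℝ] H,
      LinearMap.range (P : H →ₗ[ℝ] H) = G ∧
      LinearMap.ker (P : H →ₗ[ℝ] H) = (G.map ((U.subtypeL.comp (orthogonalProjection U)).toLinearMap))ᗮ ∧
      ∀ g ∈ G, P g = g := by
  have h := isTopCompl_orthogonal_map_starProjection hcos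
  exact ⟨h.isCompl.inf_eq_bot, h.isCompl.sup_eq_top, G.projectionL _ h, range_projectionL h,
    ker_projectionL h, fun g hg => projectionL_apply_left h ⟨g, hg⟩⟩

/-- If `cos(φ_{GU}) > 0`, then `H = G ⊕ P_U(G)^⊥` and the oblique projection with range `G`
and kernel `P_U(G)^⊥` is well defined and bounded. -/
theorem stmt4 {H : Type*} [NormedAddCommGroup H] [InnerProductSpace ℝ H] [CompleteSpace H]
    (G U : Submodule ℝ H) [CompleteSpace G] [CompleteSpace U]
    (hcos : 0 < cosAngle G U) :
    G ⊓ (G.map ((U.subtypeL.comp (orthogonalProjection U)).toLinearMap))ᗮ = ⊥ ∧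
    G ⊔ (G.map ((U.subtypeL.comp (orthogonalProjection U)).toLinearMap))ᗮ = ⊤ ∧
    ∃ P : H →L[ℝ] H,
      LinearMap.range (P : H →ₗ[ℝ] H) = G ∧
      LinearMap.ker (P : H →ₗ[ℝ] H) = (G.map ((U.subtypeL.comp (orthogonalProjection U)).toLinearMap))ᗮ ∧
      ∀ g ∈ G, P g = g :=
  stmt4_general G U hcos
end

section
/- Let {u_j} be a frame sequence in a Hilbert space H with closed span U, and let {g_k} be a Riesz sequence in H with closed span G. Then G ∩ U^⊥ = {0} if and only if the operator 𝒰*𝒢 : ℓ² → ℓ² is injective, where 𝒰 and 𝒢 are the synthesis operators of {u_j} and {g_k}. -/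
/-!
Being bounded below, `𝒢` is injective with closed range, so `G = range 𝒢`; and
`Uᗮ = (range 𝒰)ᗮ = ker 𝒰*`. Hence `ker (𝒰* 𝒢) = 𝒢⁻¹ (G ⊓ Uᗮ)`, and as `𝒢` is injective this
kernel vanishes exactly when `G ⊓ Uᗮ` does.
-/

open Submodule RealInnerProductSpace

theorem LinearMap.injective_comp_iff_range_inf_ker_eq_bot {R M N P : Type*} [Ring R]
    [AddCommGroup M] [AddCommGroup N] [AddCommGroup P] [Module R M] [Module R N] [Module R P]
    {T : M →ₗ[R] N} (S : N →ₗ[R] P) (hT : Function.Injective T) :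
    Function.Injective (S ∘ₗ T) ↔ range T ⊓ ker S = ⊥ := by
  rw [← ker_eq_bot, ker_comp, ← map_comap_eq, ← map_bot T,
    (map_injective_of_injective hT).eq_iff]

theorem ContinuousLinearMap.antilipschitz_of_mul_norm_le {𝕜 E F : Type*} [Ring 𝕜]
    [SeminormedAddCommGroup E] [SeminormedAddCommGroup F] [Module 𝕜 E] [Module 𝕜 F]
    (T : E →L[𝕜] F) {c : ℝ} (hc : 0 < c) (hT : ∀ x, c * ‖x‖ ≤ ‖T x‖) :
    AntilipschitzWith (Real.toNNReal c)⁻¹ T :=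
  T.antilipschitz_of_bound fun x => by
    rw [NNReal.coe_inv, Real.coe_toNNReal _ hc.le, ← div_eq_inv_mul, le_div_iff₀ hc, mul_comm]
    exact hT x

theorem ContinuousLinearMap.ker_adjoint_eq_orthogonal_closure_range {𝕜 E F : Type*} [RCLike 𝕜]
    [NormedAddCommGroup E] [NormedAddCommGroup F] [InnerProductSpace 𝕜 E] [InnerProductSpace 𝕜 F]
    [CompleteSpace E] [CompleteSpace F] (T : E →L[𝕜] F) :
    LinearMap.ker (T.adjoint : F →ₗ[𝕜] E) = (LinearMap.range (T : E →ₗ[𝕜] F)).topologicalClosureᗮ := by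
  rw [orthogonal_closure, T.orthogonal_range]

theorem stmt7_general {H : Type*} [NormedAddCommGroup H] [InnerProductSpace ℝ H] [CompleteSpace H]
    (𝒰 𝒢 : lp (fun _ : ℕ => ℝ) 2 →L[ℝ] H)
    (U G : Submodule ℝ H)
    (hU : U = (LinearMap.range (𝒰 : lp (fun _ : ℕ => ℝ) 2 →ₗ[ℝ] H)).topologicalClosure)
    (hG : G = (LinearMap.range (𝒢 : lp (fun _ : ℕ => ℝ) 2 →ₗ[ℝ] H)).topologicalClosure)
    -- `{g_k}` is a Riesz sequence (synthesis operator bounded below):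
    (c : ℝ) (hc : 0 < c)
    (hRiesz : ∀ a : lp (fun _ : ℕ => ℝ) 2, c * ‖a‖ ≤ ‖𝒢 a‖) :
    G ⊓ Uᗮ = ⊥ ↔ Function.Injective (𝒰.adjoint.comp 𝒢) := by
  have h𝒢 := 𝒢.antilipschitz_of_mul_norm_le hc hRiesz
  rw [hG, ContinuousLinearMap.closed_range_of_antilipschitz h𝒢, hU,
    ← 𝒰.ker_adjoint_eq_orthogonal_closure_range,
    ← LinearMap.injective_comp_iff_range_inf_ker_eq_bot _ h𝒢.injective]
  rfl

/-- Let `{u_j}` be a frame sequence with synthesis operator `𝒰` and closed span `U`, and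
`{g_k}` a Riesz sequence with synthesis operator `𝒢` and closed span `G`. Then
`G ∩ U^⊥ = {0}` iff `𝒰*𝒢` is injective. -/
theorem stmt7 {H : Type*} [NormedAddCommGroup H] [InnerProductSpace ℝ H] [CompleteSpace H]
    (u g : ℕ → H)
    (𝒰 𝒢 : lp (fun _ : ℕ => ℝ) 2 →L[ℝ] H)
    (h𝒰 : ∀ (f : H) (j : ℕ), (𝒰.adjoint f : ∀ _ : ℕ, ℝ) j = ⟪f, u j⟫)
    (h𝒢 : ∀ (f : H) (k : ℕ), (𝒢.adjoint f : ∀ _ : ℕ, ℝ) k = ⟪f, g k⟫)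
    (U G : Submodule ℝ H)
    (hU : U = (LinearMap.range (𝒰 : lp (fun _ : ℕ => ℝ) 2 →ₗ[ℝ] H)).topologicalClosure)
    (hG : G = (LinearMap.range (𝒢 : lp (fun _ : ℕ => ℝ) 2 →ₗ[ℝ] H)).topologicalClosure)
    -- `{u_j}` is a frame for `U`:
    (A B : ℝ) (hA : 0 < A)
    (hframe : ∀ f ∈ U, A * ‖f‖ ^ 2 ≤ ‖𝒰.adjoint f‖ ^ 2 ∧ ‖𝒰.adjoint f‖ ^ 2 ≤ B * ‖f‖ ^ 2)
    -- `{g_k}` is a Riesz sequence (synthesis operator bounded below):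
    (c : ℝ) (hc : 0 < c)
    (hRiesz : ∀ a : lp (fun _ : ℕ => ℝ) 2, c * ‖a‖ ≤ ‖𝒢 a‖) :
    G ⊓ Uᗮ = ⊥ ↔ Function.Injective (𝒰.adjoint.comp 𝒢) :=
  stmt7_general 𝒰 𝒢 U G hU hG c hc hRiesz
end

section
/- Let 𝒰 : ℓ²(ℕ) → H be a bounded operator with closed range, and suppose (𝒰*𝒰)† and (𝒰𝒰*)† exist as bounded operators. Then (𝒰*𝒰)^{†/2} 𝒰* = 𝒰* (𝒰𝒰*)^{†/2}, where A^{†/2} denotes the unique positive square root of the positive operator A†. -/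
/-!
Write `X = 𝒰*`. The pseudoinverse identities give `(𝒰*𝒰)† X = X (𝒰𝒰*)†`, i.e. `T₁² X = X T₂²`.
For positive `A`, `B`, the relation `A² X = X B²` forces `A X = X B`: the defect `D = A X - X B`
satisfies `A D = -D B`, so `-(D*D) B = D* A D` is positive, while `(D*D) B` is positive as a
product of commuting positive operators. Hence `(D*D) B = 0`, so `D B = 0`; as `D` also vanishes
on `ker B = ker B²`, `D = 0`.

Positivity of the product of commuting positive operators `B`, `T` on a real Hilbert space comes
from the Riesz–Sz.-Nagy sequence `C₀ = B`, `Cₙ₊₁ = Cₙ - Cₙ²`: for `0 ≤ B ≤ 1` one has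
`B = ∑_{k<n} Cₖ² + Cₙ` with `0 ≤ Cₙ ≤ 1` and `Cₙ → 0` strongly, while
`⟪Cₖ² T x, x⟫ = ⟪T Cₖ x, Cₖ x⟫ ≥ 0`.
-/

open Submodule ContinuousLinearMap
open Filter Topology
open scoped InnerProduct RealInnerProductSpace

def rieszNagySeq {R : Type*} [Ring R] (b : R) : ℕ → R
  | 0 => b
  | n + 1 => rieszNagySeq b n - rieszNagySeq b n * rieszNagySeq b n

section Ring

variable {R : Type*} [Ring R] {b : R}

theorem Commute.rieszNagySeq {t : R} (hbt : Commute b t) (n : ℕ) :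
    Commute (rieszNagySeq b n) t := by
  induction n with
  | zero => exact hbt
  | succ n ih => exact ih.sub_left (ih.mul_left ih)

theorem sum_sq_rieszNagySeq_add (b : R) (n : ℕ) :
    ∑ k ∈ Finset.range n, rieszNagySeq b k * rieszNagySeq b k + rieszNagySeq b n = b := by
  induction n with
  | zero => simp [rieszNagySeq]
  | succ n ih =>
    conv_rhs => rw [← ih]
    rw [Finset.sum_range_succ, rieszNagySeq]
    abel

end Ring

namespace ContinuousLinearMap

variable {E F : Type*} [NormedAddCommGroup E] [InnerProductSpace ℝ E]
  [NormedAddCommGroup F] [InnerProductSpace ℝ F]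

theorem pinv_apply_apply_of_mem_orthogonal_ker {M : E →L[ℝ] F} {S : F →L[ℝ] E}
    (hran : S.range = M.kerᗮ) (hid : ∀ x ∈ M.range, M (S x) = x) {w : E} (hw : w ∈ M.kerᗮ) :
    S (M w) = w := by
  have hker : S (M w) - w ∈ M.ker := by
    simp [hid (M w) ⟨w, rfl⟩]
  have hperp : S (M w) - w ∈ M.kerᗮ :=
    sub_mem (hran ▸ ⟨M w, rfl⟩) hw
  exact sub_eq_zero.mp (disjoint_def.mp (orthogonal_disjoint _) _ hker hperp)

variable [CompleteSpace E] [CompleteSpace F]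

theorem IsSelfAdjoint.le_one_of_norm_le_one {B : E →L[ℝ] E} (hB : IsSelfAdjoint B)
    (hB1 : ‖B‖ ≤ 1) : B ≤ 1 := by
  refine (le_def _ _).mpr
    ((isPositive_iff' _).mpr ⟨isPositive_one.isSelfAdjoint.sub hB, fun x => ?_⟩)
  have : ⟪B x, x⟫ ≤ ‖x‖ ^ 2 :=
    calc ⟪B x, x⟫ ≤ ‖B‖ * ‖x‖ * ‖x‖ := (real_inner_le_norm _ _).trans
          (mul_le_mul_of_nonneg_right (B.le_opNorm x) (norm_nonneg x))
      _ ≤ ‖x‖ ^ 2 := by nlinarith [norm_nonneg x]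
  simpa [inner_sub_left, real_inner_self_eq_norm_sq] using this

theorem IsPositive.conj_of_isSelfAdjoint {T S : E →L[ℝ] E} (hT : T.IsPositive)
    (hS : IsSelfAdjoint S) : (S * T * S).IsPositive := by
  simpa [mul_def, comp_assoc, hS.adjoint_eq] using hT.conj_adjoint S

section RieszNagy

variable {B : E →L[ℝ] E}

theorem rieszNagySeq_isPositive (hB : B.IsPositive) (hB1 : B ≤ 1) (n : ℕ) :
    (rieszNagySeq B n).IsPositive ∧ (1 - rieszNagySeq B n).IsPositive := by
  induction n with
  | zero => exact ⟨hB, hB1⟩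
  | succ n ih =>
    obtain ⟨hC, hC1⟩ := ih
    rw [rieszNagySeq]
    generalize rieszNagySeq B n = C at hC hC1 ⊢
    have e₁ : C - C * C = C * (1 - C) * C + (1 - C) * C * (1 - C) := by noncomm_ring
    have e₂ : 1 - (C - C * C) = (1 - C) + C * 1 * C := by noncomm_ring
    rw [e₂, e₁]
    exact ⟨(hC1.conj_of_isSelfAdjoint hC.isSelfAdjoint).add
      (hC.conj_of_isSelfAdjoint hC1.isSelfAdjoint),
      hC1.add (isPositive_one.conj_of_isSelfAdjoint hC.isSelfAdjoint)⟩

theorem tendsto_rieszNagySeq_apply (hB : B.IsPositive) (hB1 : B ≤ 1) (y : E) :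
    Tendsto (fun n => rieszNagySeq B n y) atTop (𝓝 0) := by
  have hpos := rieszNagySeq_isPositive hB hB1
  have hsum : ∀ n, ∑ k ∈ Finset.range n, ‖rieszNagySeq B k y‖ ^ 2 ≤ ⟪B y, y⟫ := by
    intro n
    have h := congrArg (fun S : E →L[ℝ] E => ⟪S y, y⟫) (sum_sq_rieszNagySeq_add B n)
    simp only [add_apply, sum_apply, inner_add_left, sum_inner] at h
    rw [← h]
    have hsq : ∀ k, ⟪(rieszNagySeq B k * rieszNagySeq B k) y, y⟫ = ‖rieszNagySeq B k y‖ ^ 2 :=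
      fun k => by
        rw [mul_def, comp_apply, (hpos k).1.inner_left_eq_inner_right, real_inner_self_eq_norm_sq]
    simp only [hsq, le_add_iff_nonneg_right]
    exact (hpos n).1.inner_nonneg_left y
  have h2 := (summable_of_sum_range_le (fun _ => by positivity) hsum).tendsto_atTop_zero
  rw [tendsto_zero_iff_norm_tendsto_zero]
  simpa using h2.sqrt

theorem IsPositive.mul_of_commute_of_le_one (hB : B.IsPositive) (hB1 : B ≤ 1)
    {T : E →L[ℝ] E} (hT : T.IsPositive) (hBT : Commute B T) : (B * T).IsPositive := by
  refine (isPositive_iff' _).mpr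
    ⟨(hB.isSelfAdjoint.commute_iff hT.isSelfAdjoint).mp hBT, fun x => ?_⟩
  have hpos := rieszNagySeq_isPositive hB hB1
  have hlower : ∀ n, ⟪rieszNagySeq B n (T x), x⟫ ≤ ⟪(B * T) x, x⟫ := by
    intro n
    have h := congrArg (fun S : E →L[ℝ] E => ⟪S (T x), x⟫) (sum_sq_rieszNagySeq_add B n)
    simp only [add_apply, sum_apply, inner_add_left, sum_inner] at h
    rw [mul_def, comp_apply, ← h, le_add_iff_nonneg_left]
    refine Finset.sum_nonneg fun k _ => ?_
    have hC : rieszNagySeq B k (T x) = T (rieszNagySeq B k x) :=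
      DFunLike.congr_fun (hBT.rieszNagySeq k).eq x
    rw [mul_def, comp_apply, (hpos k).1.inner_left_eq_inner_right, hC]
    exact hT.inner_nonneg_left _
  have hlim : Tendsto (fun n => ⟪rieszNagySeq B n (T x), x⟫) atTop (𝓝 0) := by
    simpa using (tendsto_rieszNagySeq_apply hB hB1 (T x)).inner tendsto_const_nhds
  exact le_of_tendsto' hlim hlower

theorem IsPositive.mul_of_commute (hB : B.IsPositive) {T : E →L[ℝ] E} (hT : T.IsPositive)
    (hBT : Commute B T) : (B * T).IsPositive := by
  set c : ℝ := (‖B‖ + 1)⁻¹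
  have hc : 0 < c := by positivity
  have hcB : (c • B).IsPositive := hB.smul_of_nonneg hc.le
  have hcB1 : c • B ≤ 1 := by
    refine IsSelfAdjoint.le_one_of_norm_le_one hcB.isSelfAdjoint ?_
    rw [norm_smul, Real.norm_of_nonneg hc.le, inv_mul_le_one₀ (by positivity)]
    linarith
  have h := (hcB.mul_of_commute_of_le_one hcB1 hT (hBT.smul_left c)).smul_of_nonneg
    (inv_nonneg.mpr hc.le)
  rwa [smul_mul_assoc, inv_smul_smul₀ hc.ne'] at h

end RieszNagy

theorem eq_zero_of_comp_eq_zero_of_ker_le {B : F →L[ℝ] F} (hB : IsSelfAdjoint B)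
    {D : F →L[ℝ] E} (hDB : D ∘L B = 0) (hker : B.ker ≤ D.ker) : D = 0 := by
  have hBD : B ∘L D† = 0 := by
    simpa [adjoint_comp, hB.adjoint_eq] using congrArg adjoint hDB
  have hDD : D†† ∘L D† = 0 := by
    ext z
    rw [adjoint_adjoint]
    exact hker (show B ((D†) z) = 0 from congrArg (· z) hBD)
  simpa using adjoint_comp_self_eq_zero_iff.mp hDD

theorem comp_eq_comp_of_sq_comp_eq_comp_sq {A : E →L[ℝ] E} {B : F →L[ℝ] F} {X : F →L[ℝ] E}
    (hA : A.IsPositive) (hB : B.IsPositive) (h : A ∘L A ∘L X = X ∘L B ∘L B) :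
    A ∘L X = X ∘L B := by
  set D := A ∘L X - X ∘L B
  have hAD : A ∘L D = -(D ∘L B) := by
    simp only [D, comp_sub, sub_comp, comp_assoc] at h ⊢
    rw [h]; abel
  have hneg : (-(D† ∘L D * B)).IsPositive := by
    simpa [mul_def, hAD, comp_assoc] using hA.adjoint_conj D
  have hcomm : Commute (D† ∘L D) B := by
    rw [(isPositive_adjoint_comp_self D).isSelfAdjoint.commute_iff hB.isSelfAdjoint]
    simpa using hneg.isSelfAdjoint.neg
  have hPB : D† ∘L D * B = 0 := by
    refine le_antisymm ?_ ((nonneg_iff_isPositive _).mpr ?_)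
    · simpa [le_def] using hneg
    · exact (isPositive_adjoint_comp_self D).mul_of_commute hB hcomm
  have hDB : D ∘L B = 0 := by
    rw [← adjoint_comp_self_eq_zero_iff, adjoint_comp, hB.isSelfAdjoint.adjoint_eq]
    simpa [mul_def, comp_assoc] using congrArg (B ∘L ·) hPB
  have hker : B.ker ≤ D.ker := by
    intro y (hy : B y = 0)
    have hAAXy : X y ∈ (A† ∘L A).ker := by
      simpa [hA.isSelfAdjoint.adjoint_eq, hy] using congrArg (· y) h
    rw [ker_adjoint_comp_self] at hAAXy
    simpa [D, hy] using hAAXy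
  exact sub_eq_zero.mp (eq_zero_of_comp_eq_zero_of_ker_le hB.isSelfAdjoint hDB hker)

theorem pinv_comp_adjoint_eq_adjoint_comp_pinv (T : E →L[ℝ] F) {S₁ : E →L[ℝ] E}
    {S₂ : F →L[ℝ] F} (hS₁ran : S₁.range = (T† ∘L T).kerᗮ)
    (hS₁id : ∀ x ∈ (T† ∘L T).range, (T† ∘L T) (S₁ x) = x)
    (hS₂ker : S₂.ker = (T ∘L T†).rangeᗮ) (hS₂id : ∀ x ∈ (T ∘L T†).range, (T ∘L T†) (S₂ x) = x) :
    S₁ ∘L T† = T† ∘L S₂ := by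
  have hN : IsSelfAdjoint (T ∘L T†) := (isPositive_self_comp_adjoint T).isSelfAdjoint
  have hkerN : (T ∘L T†).ker = (T†).ker := ker_self_comp_adjoint T
  refine sub_eq_zero.mp (eq_zero_of_comp_eq_zero_of_ker_le hN ?_ ?_)
  · ext z
    have h₁ : S₁ ((T† ∘L T) ((T†) z)) = (T†) z := by
      refine pinv_apply_apply_of_mem_orthogonal_ker hS₁ran hS₁id fun u hu => ?_
      rw [ker_adjoint_comp_self] at hu
      rw [adjoint_inner_right, show T u = 0 from hu, inner_zero_left]
    have h₂ : (T†) (S₂ ((T ∘L T†) z)) = (T†) z := by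
      have h : S₂ ((T ∘L T†) z) - z ∈ (T ∘L T†).ker := by
        rw [LinearMap.mem_ker, coe_coe, map_sub, hS₂id ((T ∘L T†) z) ⟨z, rfl⟩, sub_self]
      rw [hkerN] at h
      simpa [sub_eq_zero] using h
    simpa using congrArg₂ (· - ·) h₁ h₂
  · intro y hy
    have hS₂y : y ∈ S₂.ker := by
      rwa [hS₂ker, orthogonal_range, hN.adjoint_eq]
    rw [hkerN] at hy
    simp [show (T†) y = 0 from hy, show S₂ y = 0 from hS₂y]

end ContinuousLinearMap

theorem stmt14_general {H : Type*} [NormedAddCommGroup H] [InnerProductSpace ℝ H] [CompleteSpace H]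
    (𝒰 : lp (fun _ : ℕ => ℝ) 2 →L[ℝ] H)
    (S₁ : lp (fun _ : ℕ => ℝ) 2 →L[ℝ] lp (fun _ : ℕ => ℝ) 2)
    (hS₁ran : LinearMap.range (S₁ : lp (fun _ : ℕ => ℝ) 2 →ₗ[ℝ] lp (fun _ : ℕ => ℝ) 2) = (LinearMap.ker ((𝒰.adjoint.comp 𝒰 : lp (fun _ : ℕ => ℝ) 2 →L[ℝ] lp (fun _ : ℕ => ℝ) 2) : lp (fun _ : ℕ => ℝ) 2 →ₗ[ℝ] lp (fun _ : ℕ => ℝ) 2))ᗮ)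
    (hS₁id : ∀ x ∈ LinearMap.range ((𝒰.adjoint.comp 𝒰 : lp (fun _ : ℕ => ℝ) 2 →L[ℝ] lp (fun _ : ℕ => ℝ) 2) : lp (fun _ : ℕ => ℝ) 2 →ₗ[ℝ] lp (fun _ : ℕ => ℝ) 2), (𝒰.adjoint.comp 𝒰) (S₁ x) = x)
    (S₂ : H →L[ℝ] H)
    (hS₂ker : LinearMap.ker (S₂ : H →ₗ[ℝ] H) = (LinearMap.range ((𝒰.comp 𝒰.adjoint : H →L[ℝ] H) : H →ₗ[ℝ] H))ᗮ)
    (hS₂id : ∀ x ∈ LinearMap.range ((𝒰.comp 𝒰.adjoint : H →L[ℝ] H) : H →ₗ[ℝ] H), (𝒰.comp 𝒰.adjoint) (S₂ x) = x)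
    (T₁ : lp (fun _ : ℕ => ℝ) 2 →L[ℝ] lp (fun _ : ℕ => ℝ) 2)
    (hT₁pos : T₁.IsPositive) (hT₁sq : T₁.comp T₁ = S₁)
    (T₂ : H →L[ℝ] H)
    (hT₂pos : T₂.IsPositive) (hT₂sq : T₂.comp T₂ = S₂) :
    T₁.comp 𝒰.adjoint = 𝒰.adjoint.comp T₂ := by
  refine comp_eq_comp_of_sq_comp_eq_comp_sq hT₁pos hT₂pos ?_
  rw [← comp_assoc, hT₁sq, hT₂sq]
  exact pinv_comp_adjoint_eq_adjoint_comp_pinv 𝒰 hS₁ran hS₁id hS₂ker hS₂id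

/-- For a bounded closed-range operator `𝒰 : ℓ² → H`, with `S₁ = (𝒰*𝒰)†`, `S₂ = (𝒰𝒰*)†`
(Moore–Penrose pseudoinverses) and `T₁ = S₁^{1/2}`, `T₂ = S₂^{1/2}` their unique positive
square roots, one has `(𝒰*𝒰)^{†/2} 𝒰* = 𝒰* (𝒰𝒰*)^{†/2}`. -/
theorem stmt14 {H : Type*} [NormedAddCommGroup H] [InnerProductSpace ℝ H] [CompleteSpace H]
    (𝒰 : lp (fun _ : ℕ => ℝ) 2 →L[ℝ] H)
    (hcr : IsClosed ((LinearMap.range (𝒰 : lp (fun _ : ℕ => ℝ) 2 →ₗ[ℝ] H) : Submodule ℝ H) : Set H))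
    (S₁ : lp (fun _ : ℕ => ℝ) 2 →L[ℝ] lp (fun _ : ℕ => ℝ) 2)
    (hS₁ker : LinearMap.ker (S₁ : lp (fun _ : ℕ => ℝ) 2 →ₗ[ℝ] lp (fun _ : ℕ => ℝ) 2) = (LinearMap.range ((𝒰.adjoint.comp 𝒰 : lp (fun _ : ℕ => ℝ) 2 →L[ℝ] lp (fun _ : ℕ => ℝ) 2) : lp (fun _ : ℕ => ℝ) 2 →ₗ[ℝ] lp (fun _ : ℕ => ℝ) 2))ᗮ)
    (hS₁ran : LinearMap.range (S₁ : lp (fun _ : ℕ => ℝ) 2 →ₗ[ℝ] lp (fun _ : ℕ => ℝ) 2) = (LinearMap.ker ((𝒰.adjoint.comp 𝒰 : lp (fun _ : ℕ => ℝ) 2 →L[ℝ] lp (fun _ : ℕ => ℝ) 2) : lp (fun _ : ℕ => ℝ) 2 →ₗ[ℝ] lp (fun _ : ℕ => ℝ) 2))ᗮ)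
    (hS₁id : ∀ x ∈ LinearMap.range ((𝒰.adjoint.comp 𝒰 : lp (fun _ : ℕ => ℝ) 2 →L[ℝ] lp (fun _ : ℕ => ℝ) 2) : lp (fun _ : ℕ => ℝ) 2 →ₗ[ℝ] lp (fun _ : ℕ => ℝ) 2), (𝒰.adjoint.comp 𝒰) (S₁ x) = x)
    (S₂ : H →L[ℝ] H)
    (hS₂ker : LinearMap.ker (S₂ : H →ₗ[ℝ] H) = (LinearMap.range ((𝒰.comp 𝒰.adjoint : H →L[ℝ] H) : H →ₗ[ℝ] H))ᗮ)
    (hS₂ran : LinearMap.range (S₂ : H →ₗ[ℝ] H) = (LinearMap.ker ((𝒰.comp 𝒰.adjoint : H →L[ℝ] H) : H →ₗ[ℝ] H))ᗮ)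
    (hS₂id : ∀ x ∈ LinearMap.range ((𝒰.comp 𝒰.adjoint : H →L[ℝ] H) : H →ₗ[ℝ] H), (𝒰.comp 𝒰.adjoint) (S₂ x) = x)
    (T₁ : lp (fun _ : ℕ => ℝ) 2 →L[ℝ] lp (fun _ : ℕ => ℝ) 2)
    (hT₁pos : T₁.IsPositive) (hT₁sq : T₁.comp T₁ = S₁)
    (T₂ : H →L[ℝ] H)
    (hT₂pos : T₂.IsPositive) (hT₂sq : T₂.comp T₂ = S₂) :
    T₁.comp 𝒰.adjoint = 𝒰.adjoint.comp T₂ :=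
  stmt14_general 𝒰 S₁ hS₁ran hS₁id S₂ hS₂ker hS₂id T₁ hT₁pos hT₁sq T₂ hT₂pos hT₂sq
end

section
/- Let {u_j} be a frame sequence with synthesis operator 𝒰 and closed span U, {g_k} a frame sequence with synthesis operator 𝒢 and closed span G, and cos(φ_{GU}) > 0. Then the operator R = 𝒢((𝒰*𝒰)^{†/2}𝒰*𝒢)†(𝒰*𝒰)^{†/2}𝒰* is well defined, is idempotent, has range G and null space P_U(G)^⊥; i.e., R equals the oblique projection with range G and kernel P_U(G)^⊥. -/
/-!
Put `W = (𝒰*𝒰)^{†/2} 𝒰*`, so that `K = W 𝒢` and `R = 𝒢 K† W`. The lower frame bound makes the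
ranges of `𝒰` and `𝒢` closed, and then `W* W = 𝒰 (𝒰*𝒰)† 𝒰* = P_U`. The identity `K† K K† = K†`
gives `R² = R`. Since `‖K y‖ = ‖P_U 𝒢 y‖ ≥ cos(φ_{GU}) ‖𝒢 y‖`, the kernel of `K` is that of `𝒢`, so
`𝒢 K† K = 𝒢` and `R` maps onto `G`. Finally
`ker R = W⁻¹(ker K†) = W⁻¹((range K)^⊥) = ker (K* W) = ker (𝒢* P_U) = (P_U G)^⊥`.
-/

open Submodule ContinuousLinearMap

section Angle

variable {H : Type*} [NormedAddCommGroup H] [InnerProductSpace ℝ H]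

theorem cosAngle_mul_norm_le_s17 {S V : Submodule ℝ H} [CompleteSpace V] {g : H} (hg : g ∈ S) :
    cosAngle S V * ‖g‖ ≤ ‖V.starProjection g‖ := by
  rcases eq_or_ne g 0 with rfl | hne
  · simp
  have hgpos : 0 < ‖g‖ := norm_pos_iff.mpr hne
  have hle : cosAngle S V ≤ ‖V.starProjection (‖g‖⁻¹ • g)‖ := by
    refine csInf_le ⟨0, ?_⟩ ⟨‖g‖⁻¹ • g, S.smul_mem _ hg, ?_, rfl⟩
    · rintro r ⟨s, -, -, rfl⟩
      exact norm_nonneg _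
    · rw [norm_smul, norm_inv, norm_norm, inv_mul_cancel₀ hgpos.ne']
  rw [map_smul, norm_smul, norm_inv, norm_norm] at hle
  rwa [← le_div_iff₀ hgpos, div_eq_inv_mul]

theorem eq_zero_of_starProjection_eq_zero {S V : Submodule ℝ H} [CompleteSpace V]
    (hcos : 0 < cosAngle S V) {g : H} (hg : g ∈ S) (h : V.starProjection g = 0) : g = 0 := by
  have hle := cosAngle_mul_norm_le_s17 (V := V) hg
  rw [h, norm_zero, ← mul_zero (cosAngle S V)] at hle
  exact norm_le_zero_iff.mp (le_of_mul_le_mul_left hle hcos)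

end Angle

section PseudoInverse

variable {E F H : Type*} [NormedAddCommGroup E] [InnerProductSpace ℝ E]
  [NormedAddCommGroup F] [NormedSpace ℝ F] [NormedAddCommGroup H] [NormedSpace ℝ H]
  {K : E →L[ℝ] F} {Kd : F →L[ℝ] E}

theorem eq_zero_of_apply_pinv_eq_zero (hran : Kd.range = K.kerᗮ) {y : F} (hy : K (Kd y) = 0) :
    Kd y = 0 := by
  have hperp : Kd y ∈ K.kerᗮ := hran ▸ LinearMap.mem_range_self _ y
  exact inner_self_eq_zero.mp ((mem_orthogonal _ _).1 hperp _ hy)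

theorem pinv_apply_apply_pinv (hran : Kd.range = K.kerᗮ) (hid : ∀ y ∈ K.range, K (Kd y) = y)
    (y : F) : Kd (K (Kd y)) = Kd y := by
  have h : K (Kd (K (Kd y) - y)) = 0 := by
    rw [map_sub, map_sub, hid (K (Kd y)) ⟨Kd y, rfl⟩, sub_self]
  simpa [sub_eq_zero] using eq_zero_of_apply_pinv_eq_zero hran h

variable {𝒢 : E →L[ℝ] H} {W : H →L[ℝ] F}

theorem comp_pinv_comp_idempotent (hran : Kd.range = (W ∘L 𝒢).kerᗮ)
    (hid : ∀ y ∈ (W ∘L 𝒢).range, W (𝒢 (Kd y)) = y) (x : H) :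
    (𝒢 ∘L Kd ∘L W) ((𝒢 ∘L Kd ∘L W) x) = (𝒢 ∘L Kd ∘L W) x :=
  congrArg 𝒢 (pinv_apply_apply_pinv hran hid (W x))

theorem range_comp_pinv_comp (hid : ∀ y ∈ (W ∘L 𝒢).range, W (𝒢 (Kd y)) = y)
    (hker : (W ∘L 𝒢).ker ≤ 𝒢.ker) : (𝒢 ∘L Kd ∘L W).range = 𝒢.range := by
  refine le_antisymm (LinearMap.range_comp_le_range _ _) ?_
  rintro _ ⟨x, rfl⟩
  refine ⟨𝒢 x, ?_⟩
  have h : Kd (W (𝒢 x)) - x ∈ (W ∘L 𝒢).ker := by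
    simp [hid (W (𝒢 x)) ⟨x, rfl⟩]
  simpa [sub_eq_zero] using hker h

theorem ker_comp_pinv_comp (hran : Kd.range = (W ∘L 𝒢).kerᗮ) :
    (𝒢 ∘L Kd ∘L W).ker = Kd.ker.comap (W : H →ₗ[ℝ] F) := by
  ext x
  refine ⟨fun h => eq_zero_of_apply_pinv_eq_zero hran ?_, fun h => ?_⟩
  · simpa using congrArg W h
  · simp_all

end PseudoInverse

section Frame

variable {E H : Type*} [NormedAddCommGroup E] [InnerProductSpace ℝ E] [CompleteSpace E]
  [NormedAddCommGroup H] [InnerProductSpace ℝ H] [CompleteSpace H]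

theorem range_eq_of_frame_lower_bound (𝒢 : E →L[ℝ] H) {G : Submodule ℝ H}
    (hG : G = 𝒢.range.topologicalClosure) {C : ℝ} (hC : 0 < C)
    (hframe : ∀ f ∈ G, C * ‖f‖ ^ 2 ≤ ‖𝒢.adjoint f‖ ^ 2) : 𝒢.range = G := by
  subst hG
  have := 𝒢.range.isClosed_topologicalClosure.completeSpace_coe
  set A := 𝒢.adjoint ∘L 𝒢.range.topologicalClosure.subtypeL
  -- `hcoercive.continuousLinearEquivOfBilin` is `A* A`, invertible by Lax–Milgram.
  have hcoercive : IsCoercive ((innerSL ℝ).bilinearComp A A) :=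
    ⟨C, hC, fun u => by simpa [A, sq, mul_assoc] using hframe u u.2⟩
  refine le_antisymm (le_topologicalClosure _) fun g hg => ?_
  obtain ⟨u, hu⟩ := hcoercive.continuousLinearEquivOfBilin.surjective ⟨g, hg⟩
  have hmem : 𝒢 (𝒢.adjoint u) ∈ 𝒢.range.topologicalClosure := le_topologicalClosure _ ⟨_, rfl⟩
  suffices (⟨𝒢 (𝒢.adjoint u), hmem⟩ : 𝒢.range.topologicalClosure) = ⟨g, hg⟩ from
    ⟨𝒢.adjoint u, congrArg Subtype.val this⟩
  refine hu ▸ ext_inner_right ℝ fun w => ?_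
  rw [IsCoercive.continuousLinearEquivOfBilin_apply, bilinearComp_apply, innerSL_apply_apply,
    coe_inner, ← adjoint_inner_right]
  rfl

theorem comp_pinv_comp_adjoint_eq_starProjection (𝒰 : E →L[ℝ] H) {U : Submodule ℝ H}
    [U.HasOrthogonalProjection] (hU : 𝒰.range = U) {Sd : E →L[ℝ] E}
    (hSd : ∀ x ∈ (𝒰.adjoint ∘L 𝒰).range, (𝒰.adjoint ∘L 𝒰) (Sd x) = x) :
    𝒰 ∘L Sd ∘L 𝒰.adjoint = U.starProjection := by
  have hker : Uᗮ = 𝒰.adjoint.ker := hU ▸ 𝒰.orthogonal_range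
  ext g
  obtain ⟨x, hx⟩ : U.starProjection g ∈ 𝒰.range := hU ▸ U.starProjection_apply_mem g
  have hg : 𝒰.adjoint g = 𝒰.adjoint (𝒰 x) := by
    have h := hker ▸ U.sub_starProjection_mem_orthogonal g
    rw [LinearMap.mem_ker, map_sub, sub_eq_zero] at h
    exact h.trans (congrArg _ hx.symm)
  refine (eq_starProjection_of_mem_orthogonal (hU ▸ ⟨_, rfl⟩) ?_).symm
  rw [hker, LinearMap.mem_ker, coe_coe, map_sub, sub_eq_zero]
  exact (hSd _ ⟨x, hg.symm⟩).symm

theorem adjoint_comp_self_eq_starProjection (𝒰 : E →L[ℝ] H) {U : Submodule ℝ H}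
    [U.HasOrthogonalProjection] (hU : 𝒰.range = U) {Sd T : E →L[ℝ] E}
    (hSd : ∀ x ∈ (𝒰.adjoint ∘L 𝒰).range, (𝒰.adjoint ∘L 𝒰) (Sd x) = x) (hT : IsSelfAdjoint T)
    (hTT : T ∘L T = Sd) : (T ∘L 𝒰.adjoint).adjoint ∘L (T ∘L 𝒰.adjoint) = U.starProjection := by
  rw [← comp_pinv_comp_adjoint_eq_starProjection 𝒰 hU hSd, ← hTT, adjoint_comp, adjoint_adjoint,
    hT.adjoint_eq]
  simp only [comp_assoc]

end Frame

theorem stmt17_general {H : Type*} [NormedAddCommGroup H] [InnerProductSpace ℝ H] [CompleteSpace H]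
    (𝒰 𝒢 : lp (fun _ : ℕ => ℝ) 2 →L[ℝ] H)
    (U G : Submodule ℝ H) [CompleteSpace U]
    (hU : U = (LinearMap.range (𝒰 : lp (fun _ : ℕ => ℝ) 2 →ₗ[ℝ] H)).topologicalClosure)
    (hG : G = (LinearMap.range (𝒢 : lp (fun _ : ℕ => ℝ) 2 →ₗ[ℝ] H)).topologicalClosure)
    (A B : ℝ) (hA : 0 < A)
    (hframeU : ∀ f ∈ U, A * ‖f‖ ^ 2 ≤ ‖𝒰.adjoint f‖ ^ 2 ∧ ‖𝒰.adjoint f‖ ^ 2 ≤ B * ‖f‖ ^ 2)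
    (C D : ℝ) (hC : 0 < C)
    (hframeG : ∀ f ∈ G, C * ‖f‖ ^ 2 ≤ ‖𝒢.adjoint f‖ ^ 2 ∧ ‖𝒢.adjoint f‖ ^ 2 ≤ D * ‖f‖ ^ 2)
    -- `Sd = (𝒰*𝒰)†` and `T = (𝒰*𝒰)^{†/2}`:
    (Sd : lp (fun _ : ℕ => ℝ) 2 →L[ℝ] lp (fun _ : ℕ => ℝ) 2)
    (hSdid : ∀ x ∈ LinearMap.range ((𝒰.adjoint.comp 𝒰) :
        lp (fun _ : ℕ => ℝ) 2 →ₗ[ℝ] lp (fun _ : ℕ => ℝ) 2), (𝒰.adjoint.comp 𝒰) (Sd x) = x)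
    (T : lp (fun _ : ℕ => ℝ) 2 →L[ℝ] lp (fun _ : ℕ => ℝ) 2)
    (hTpos : T.IsPositive) (hTsq : T.comp T = Sd)
    -- `Kd = (T𝒰*𝒢)†`, the pseudoinverse of `K = (𝒰*𝒰)^{†/2}𝒰*𝒢`:
    (Kd : lp (fun _ : ℕ => ℝ) 2 →L[ℝ] lp (fun _ : ℕ => ℝ) 2)
    (hKdker : LinearMap.ker (Kd : lp (fun _ : ℕ => ℝ) 2 →ₗ[ℝ] lp (fun _ : ℕ => ℝ) 2) = (LinearMap.range ((T.comp (𝒰.adjoint.comp 𝒢)) :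
        lp (fun _ : ℕ => ℝ) 2 →ₗ[ℝ] lp (fun _ : ℕ => ℝ) 2))ᗮ)
    (hKdran : LinearMap.range (Kd : lp (fun _ : ℕ => ℝ) 2 →ₗ[ℝ] lp (fun _ : ℕ => ℝ) 2) = (LinearMap.ker ((T.comp (𝒰.adjoint.comp 𝒢)) :
        lp (fun _ : ℕ => ℝ) 2 →ₗ[ℝ] lp (fun _ : ℕ => ℝ) 2))ᗮ)
    (hKdid : ∀ x ∈ LinearMap.range ((T.comp (𝒰.adjoint.comp 𝒢)) :
        lp (fun _ : ℕ => ℝ) 2 →ₗ[ℝ] lp (fun _ : ℕ => ℝ) 2),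
      (T.comp (𝒰.adjoint.comp 𝒢)) (Kd x) = x)
    (hcos : 0 < cosAngle G U) :
    (∀ x : H, (𝒢.comp (Kd.comp (T.comp 𝒰.adjoint)))
        ((𝒢.comp (Kd.comp (T.comp 𝒰.adjoint))) x) =
        (𝒢.comp (Kd.comp (T.comp 𝒰.adjoint))) x) ∧
    LinearMap.range ((𝒢.comp (Kd.comp (T.comp 𝒰.adjoint))) : H →ₗ[ℝ] H) = G ∧
    LinearMap.ker ((𝒢.comp (Kd.comp (T.comp 𝒰.adjoint))) : H →ₗ[ℝ] H) =
      (G.map ((U.subtypeL.comp (orthogonalProjection U)).toLinearMap))ᗮ := by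
  have hranU := range_eq_of_frame_lower_bound 𝒰 hU hA fun f hf => (hframeU f hf).1
  have hranG := range_eq_of_frame_lower_bound 𝒢 hG hC fun f hf => (hframeG f hf).1
  rw [← comp_assoc] at hKdker hKdran hKdid
  have hWW := adjoint_comp_self_eq_starProjection 𝒰 hranU hSdid hTpos.isSelfAdjoint hTsq
  have hker : ((T ∘L 𝒰.adjoint) ∘L 𝒢).ker ≤ 𝒢.ker := fun y hy => by
    have hPy : U.starProjection (𝒢 y) = 0 := by
      rw [← hWW]
      exact (congrArg (T ∘L 𝒰.adjoint).adjoint hy).trans (map_zero _)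
    exact eq_zero_of_starProjection_eq_zero hcos (hranG ▸ ⟨y, rfl⟩) hPy
  refine ⟨comp_pinv_comp_idempotent hKdran hKdid,
    (range_comp_pinv_comp hKdid hker).trans hranG, ?_⟩
  rw [ker_comp_pinv_comp hKdran, hKdker, orthogonal_range, ← LinearMap.ker_comp,
    ← toLinearMap_comp, adjoint_comp, comp_assoc, hWW, ← hranG, ← LinearMap.range_comp,
    ← toLinearMap_comp, orthogonal_range, adjoint_comp,
    ← (isSelfAdjoint_starProjection U).adjoint_eq]
  rfl

/-- If `cos(φ_{GU}) > 0`, then `R = 𝒢((𝒰*𝒰)^{†/2}𝒰*𝒢)†(𝒰*𝒰)^{†/2}𝒰*` is well defined,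
idempotent, has range `G` and null space `P_U(G)^⊥`; i.e., `R` is the oblique projection
with range `G` and kernel `P_U(G)^⊥`.  Here `T = (𝒰*𝒰)^{†/2}` is the positive square root
of the pseudoinverse `Sd = (𝒰*𝒰)†`, and `Kd = ((𝒰*𝒰)^{†/2}𝒰*𝒢)†` is a pseudoinverse. -/
theorem stmt17 {H : Type*} [NormedAddCommGroup H] [InnerProductSpace ℝ H] [CompleteSpace H]
    (𝒰 𝒢 : lp (fun _ : ℕ => ℝ) 2 →L[ℝ] H)
    (U G : Submodule ℝ H) [CompleteSpace U] [CompleteSpace G]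
    (hU : U = (LinearMap.range (𝒰 : lp (fun _ : ℕ => ℝ) 2 →ₗ[ℝ] H)).topologicalClosure)
    (hG : G = (LinearMap.range (𝒢 : lp (fun _ : ℕ => ℝ) 2 →ₗ[ℝ] H)).topologicalClosure)
    (A B : ℝ) (hA : 0 < A)
    (hframeU : ∀ f ∈ U, A * ‖f‖ ^ 2 ≤ ‖𝒰.adjoint f‖ ^ 2 ∧ ‖𝒰.adjoint f‖ ^ 2 ≤ B * ‖f‖ ^ 2)
    (C D : ℝ) (hC : 0 < C)
    (hframeG : ∀ f ∈ G, C * ‖f‖ ^ 2 ≤ ‖𝒢.adjoint f‖ ^ 2 ∧ ‖𝒢.adjoint f‖ ^ 2 ≤ D * ‖f‖ ^ 2)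
    -- `Sd = (𝒰*𝒰)†` and `T = (𝒰*𝒰)^{†/2}`:
    (Sd : lp (fun _ : ℕ => ℝ) 2 →L[ℝ] lp (fun _ : ℕ => ℝ) 2)
    (hSdker : LinearMap.ker (Sd : lp (fun _ : ℕ => ℝ) 2 →ₗ[ℝ] lp (fun _ : ℕ => ℝ) 2) = (LinearMap.range ((𝒰.adjoint.comp 𝒰) :
        lp (fun _ : ℕ => ℝ) 2 →ₗ[ℝ] lp (fun _ : ℕ => ℝ) 2))ᗮ)
    (hSdran : LinearMap.range (Sd : lp (fun _ : ℕ => ℝ) 2 →ₗ[ℝ] lp (fun _ : ℕ => ℝ) 2) = (LinearMap.ker ((𝒰.adjoint.comp 𝒰) :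
        lp (fun _ : ℕ => ℝ) 2 →ₗ[ℝ] lp (fun _ : ℕ => ℝ) 2))ᗮ)
    (hSdid : ∀ x ∈ LinearMap.range ((𝒰.adjoint.comp 𝒰) :
        lp (fun _ : ℕ => ℝ) 2 →ₗ[ℝ] lp (fun _ : ℕ => ℝ) 2), (𝒰.adjoint.comp 𝒰) (Sd x) = x)
    (T : lp (fun _ : ℕ => ℝ) 2 →L[ℝ] lp (fun _ : ℕ => ℝ) 2)
    (hTpos : T.IsPositive) (hTsq : T.comp T = Sd)
    -- `Kd = (T𝒰*𝒢)†`, the pseudoinverse of `K = (𝒰*𝒰)^{†/2}𝒰*𝒢`: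
    (Kd : lp (fun _ : ℕ => ℝ) 2 →L[ℝ] lp (fun _ : ℕ => ℝ) 2)
    (hKdker : LinearMap.ker (Kd : lp (fun _ : ℕ => ℝ) 2 →ₗ[ℝ] lp (fun _ : ℕ => ℝ) 2) = (LinearMap.range ((T.comp (𝒰.adjoint.comp 𝒢)) :
        lp (fun _ : ℕ => ℝ) 2 →ₗ[ℝ] lp (fun _ : ℕ => ℝ) 2))ᗮ)
    (hKdran : LinearMap.range (Kd : lp (fun _ : ℕ => ℝ) 2 →ₗ[ℝ] lp (fun _ : ℕ => ℝ) 2) = (LinearMap.ker ((T.comp (𝒰.adjoint.comp 𝒢)) :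
        lp (fun _ : ℕ => ℝ) 2 →ₗ[ℝ] lp (fun _ : ℕ => ℝ) 2))ᗮ)
    (hKdid : ∀ x ∈ LinearMap.range ((T.comp (𝒰.adjoint.comp 𝒢)) :
        lp (fun _ : ℕ => ℝ) 2 →ₗ[ℝ] lp (fun _ : ℕ => ℝ) 2),
      (T.comp (𝒰.adjoint.comp 𝒢)) (Kd x) = x)
    (hcos : 0 < cosAngle G U) :
    (∀ x : H, (𝒢.comp (Kd.comp (T.comp 𝒰.adjoint)))
        ((𝒢.comp (Kd.comp (T.comp 𝒰.adjoint))) x) =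
        (𝒢.comp (Kd.comp (T.comp 𝒰.adjoint))) x) ∧
    LinearMap.range ((𝒢.comp (Kd.comp (T.comp 𝒰.adjoint))) : H →ₗ[ℝ] H) = G ∧
    LinearMap.ker ((𝒢.comp (Kd.comp (T.comp 𝒰.adjoint))) : H →ₗ[ℝ] H) =
      (G.map ((U.subtypeL.comp (orthogonalProjection U)).toLinearMap))ᗮ :=
  stmt17_general 𝒰 𝒢 U G hU hG A B hA hframeU C D hC hframeG Sd hSdid T hTpos hTsq Kd hKdker hKdran
    hKdid hcos
end

section
/- Let {u_j}_{j=1}^n and {g_k}_{k=1}^m be finite sequences in a Hilbert space H with synthesis operators 𝒰 and 𝒢, and suppose g_1,…,g_m are linearly independent with span G, and U = span{u_j}. Then cos²(φ_{GU}) = λ_min((𝒢*𝒢)^{-1} 𝒢* 𝒰𝒰† 𝒢), the smallest eigenvalue of (𝒢*𝒢)^{-1}𝒢*𝒰𝒰†𝒢. -/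
open Submodule

/-!
The synthesis operator `𝒢` maps `ℝᵐ` isomorphically onto `G`, with continuous inverse
`(𝒢*𝒢)⁻¹𝒢*`. Since `𝒢* P_G = 𝒢*`, this isomorphism conjugates `(𝒢*𝒢)⁻¹𝒢* P_U 𝒢` to the
compression `P_G P_U|_G`, so both operators have the same spectrum. The compression is symmetric
with quadratic form `⟪P_G P_U s, s⟫ = ‖P_U s‖²`, and by Rayleigh–Ritz the least point of the
spectrum of a symmetric operator on a finite-dimensional space is the minimum of its quadratic
form on the unit sphere; here that minimum is `cos²(φ_{GU})`.
-/

open Metric Module.End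
open scoped RealInnerProductSpace

theorem Real.sInf_image_sq {A : Set ℝ} (hA : ∀ x ∈ A, 0 ≤ x) :
    sInf ((· ^ 2) '' A) = sInf A ^ 2 := by
  rcases A.eq_empty_or_nonempty with rfl | hne
  · simp
  exact (pow_left_monotoneOn.mono hA).map_csInf_of_continuousWithinAt
    (continuous_pow 2).continuousWithinAt hne ⟨0, hA⟩ |>.symm

theorem cosAngle_sq {H : Type*} [NormedAddCommGroup H] [InnerProductSpace ℝ H]
    (S V : Submodule ℝ H) [CompleteSpace V] :
    cosAngle S V ^ 2 = sInf ((fun s : S ↦ ‖V.starProjection s‖ ^ 2) '' sphere 0 1) := by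
  have hcos : cosAngle S V = sInf ((fun s : S ↦ ‖V.starProjection s‖) '' sphere 0 1) := by
    unfold cosAngle
    congr 1
    ext r
    constructor
    · rintro ⟨s, hs, hs1, rfl⟩
      exact ⟨⟨s, hs⟩, by simpa using hs1, rfl⟩
    · rintro ⟨s, hs, rfl⟩
      exact ⟨s, s.2, by simpa using hs, rfl⟩
  rw [hcos, ← Real.sInf_image_sq (by rintro _ ⟨s, -, rfl⟩; positivity), Set.image_image]

section Rayleigh

variable {E : Type*} [NormedAddCommGroup E] [InnerProductSpace ℝ E]

theorem Module.End.HasEigenvector.inner_apply_self {T : Module.End ℝ E} {μ : ℝ} {x : E}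
    (h : T.HasEigenvector μ x) : ⟪T x, x⟫ = μ * ‖x‖ ^ 2 := by
  rw [h.apply_eq_smul, real_inner_smul_left, real_inner_self_eq_norm_sq]

theorem Module.End.HasEigenvalue.exists_mem_sphere_inner_eq {T : Module.End ℝ E} {μ : ℝ}
    (h : T.HasEigenvalue μ) : ∃ x ∈ sphere (0 : E) 1, ⟪T x, x⟫ = μ := by
  obtain ⟨v, hv⟩ := h.exists_hasEigenvector
  have hv0 : ‖v‖ ≠ 0 := norm_ne_zero_iff.2 hv.2
  refine ⟨‖v‖⁻¹ • v, by simp [norm_smul, hv0], ?_⟩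
  rw [map_smul, real_inner_smul_left, real_inner_smul_right, hv.inner_apply_self]
  field_simp

theorem LinearMap.IsSymmetric.sInf_spectrum_eq_sInf_inner_self [FiniteDimensional ℝ E]
    {T : E →L[ℝ] E} (hT : (T : E →ₗ[ℝ] E).IsSymmetric) :
    sInf (spectrum ℝ T) = sInf ((fun x ↦ ⟪T x, x⟫) '' sphere (0 : E) 1) := by
  have := FiniteDimensional.complete ℝ E
  have hspec : ∀ μ, μ ∈ spectrum ℝ T ↔ HasEigenvalue (T : E →ₗ[ℝ] E) μ := fun μ ↦ by
    rw [ContinuousLinearMap.spectrum_eq, hasEigenvalue_iff_mem_spectrum]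
  rcases subsingleton_or_nontrivial E with hE | hE
  · -- both sets are empty, and `sInf ∅ = 0`
    simp [spectrum.of_subsingleton, sphere_eq_empty_of_subsingleton one_ne_zero]
  obtain ⟨x₀, hx₀, hmin⟩ := (isCompact_sphere (0 : E) 1).exists_isMinOn
    (NormedSpace.sphere_nonempty.2 zero_le_one) T.reApplyInnerSelf_continuous.continuousOn
  have hx₀1 : ‖x₀‖ = 1 := mem_sphere_zero_iff_norm.1 hx₀
  have hleast : IsLeast ((fun x ↦ ⟪T x, x⟫) '' sphere (0 : E) 1) ⟪T x₀, x₀⟫ :=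
    ⟨Set.mem_image_of_mem _ hx₀, Set.forall_mem_image.2 fun x hx ↦ hmin hx⟩
  have heig : HasEigenvalue (T : E →ₗ[ℝ] E) ⟪T x₀, x₀⟫ := by
    have hvec := hT.isSelfAdjoint.hasEigenvector_of_isMinOn
      (ne_zero_of_mem_unit_sphere ⟨x₀, hx₀⟩) (by rwa [hx₀1])
    have hval := hvec.inner_apply_self
    rw [hx₀1, one_pow, mul_one] at hval
    exact hval ▸ hasEigenvalue_of_hasEigenvector hvec
  have hleast' : IsLeast (spectrum ℝ T) ⟪T x₀, x₀⟫ :=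
    ⟨(hspec _).2 heig, fun μ hμ ↦ by
      obtain ⟨x, hx, rfl⟩ := ((hspec μ).1 hμ).exists_mem_sphere_inner_eq
      exact hleast.2 ⟨x, hx, rfl⟩⟩
  rw [hleast.csInf_eq, hleast'.csInf_eq]

end Rayleigh

namespace Submodule

variable {H : Type*} [NormedAddCommGroup H] [InnerProductSpace ℝ H]
  (K : Submodule ℝ H) [K.HasOrthogonalProjection]

noncomputable def compress (A : H →L[ℝ] H) : K →L[ℝ] K :=
  K.orthogonalProjectionOnto ∘L A ∘L K.subtypeL

theorem inner_compress_left (A : H →L[ℝ] H) (x y : K) : ⟪K.compress A x, y⟫ = ⟪A x, y⟫ :=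
  inner_orthogonalProjectionOnto_eq_of_mem_right y (A x)

theorem isSymmetric_compress {A : H →L[ℝ] H} (hA : (A : H →ₗ[ℝ] H).IsSymmetric) :
    (K.compress A : K →ₗ[ℝ] K).IsSymmetric := fun x y ↦ by
  simp only [ContinuousLinearMap.coe_coe]
  rw [inner_compress_left, ← real_inner_comm x, inner_compress_left, real_inner_comm (x : H)]
  exact hA x y

theorem inner_compress_starProjection_self (U : Submodule ℝ H) [U.HasOrthogonalProjection]
    (x : K) : ⟪K.compress U.starProjection x, x⟫ = ‖U.starProjection x‖ ^ 2 := by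
  rw [inner_compress_left]
  exact U.re_inner_starProjection_eq_normSq x

end Submodule

namespace ContinuousLinearMap

noncomputable def equivRangeOfLeftInverse {R M N : Type*} [Semiring R] [AddCommMonoid M]
    [Module R M] [TopologicalSpace M] [AddCommMonoid N] [Module R N] [TopologicalSpace N]
    (f : M →L[R] N) (g : N →L[R] M) (h : g ∘L f = .id R M) : M ≃L[R] f.range :=
  { LinearEquiv.ofLeftInverse (g := g) fun x ↦ congr($h x) with
    continuous_toFun := f.continuous.subtype_mk _
    continuous_invFun := (g ∘L f.range.subtypeL).continuous }

theorem range_eq_span_of_apply_eq_sum {H ι : Type*} [NormedAddCommGroup H]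
    [InnerProductSpace ℝ H] [Fintype ι] {g : ι → H} {𝒢 : EuclideanSpace ℝ ι →L[ℝ] H}
    (h𝒢 : ∀ c, 𝒢 c = ∑ k, c k • g k) :
    𝒢.range = span ℝ (Set.range g) := by
  have h : (𝒢 : EuclideanSpace ℝ ι →ₗ[ℝ] H) =
      Fintype.linearCombination ℝ g ∘ₗ (WithLp.linearEquiv 2 ℝ (ι → ℝ)).toLinearMap :=
    LinearMap.ext fun c ↦ by simp [h𝒢, Fintype.linearCombination_apply]
  rw [h, LinearMap.range_comp_of_range_eq_top _ (LinearEquiv.range _),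
    Fintype.range_linearCombination]

variable {E H : Type*} [NormedAddCommGroup E] [InnerProductSpace ℝ E] [CompleteSpace E]
  [NormedAddCommGroup H] [InnerProductSpace ℝ H] [CompleteSpace H]

theorem adjoint_comp_starProjection_range (T : E →L[ℝ] H) [T.range.HasOrthogonalProjection] :
    T.adjoint ∘L T.range.starProjection = T.adjoint := by
  ext x
  refine ext_inner_right ℝ fun c ↦ ?_
  have hc : T c ∈ T.range := ⟨c, rfl⟩
  rw [comp_apply, adjoint_inner_left, adjoint_inner_left, inner_starProjection_left_eq_right,
    starProjection_eq_self_iff.2 hc]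

theorem spectrum_comp_adjoint_comp_eq_spectrum_compress {T : E →L[ℝ] H} {L : E →L[ℝ] E}
    (hL : L ∘L (T.adjoint ∘L T) = .id ℝ E) [T.range.HasOrthogonalProjection] (A : H →L[ℝ] H) :
    spectrum ℝ (L ∘L (T.adjoint ∘L (A ∘L T))) = spectrum ℝ (T.range.compress A) := by
  let e := equivRangeOfLeftInverse T (L ∘L T.adjoint) hL
  have hconj : L ∘L (T.adjoint ∘L (A ∘L T)) =
      e.symm.conjContinuousAlgEquiv (T.range.compress A) := by
    ext c
    exact congr(L ($(adjoint_comp_starProjection_range T) (A (T c)))).symm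
  rw [hconj, AlgEquiv.spectrum_eq]

end ContinuousLinearMap

theorem stmt19_general {H : Type*} [NormedAddCommGroup H] [InnerProductSpace ℝ H] [CompleteSpace H]
    {m : ℕ} (g : Fin m → H)
    (𝒢 : EuclideanSpace ℝ (Fin m) →L[ℝ] H)
    (h𝒢 : ∀ c, 𝒢 c = ∑ k, c k • g k)
    (U G : Submodule ℝ H) [CompleteSpace U] [CompleteSpace G]
    (hG : G = Submodule.span ℝ (Set.range g))
    -- `(𝒢*𝒢)⁻¹`:
    (Ginv : EuclideanSpace ℝ (Fin m) →L[ℝ] EuclideanSpace ℝ (Fin m))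
    (hGinv₁ : Ginv.comp (𝒢.adjoint.comp 𝒢) = ContinuousLinearMap.id ℝ _) :
    cosAngle G U ^ 2 =
      sInf (spectrum ℝ (Ginv.comp (𝒢.adjoint.comp
        ((U.subtypeL.comp (orthogonalProjection U)).comp 𝒢)))) := by
  obtain rfl : 𝒢.range = G :=
    (ContinuousLinearMap.range_eq_span_of_apply_eq_sum h𝒢).trans hG.symm
  calc cosAngle 𝒢.range U ^ 2
      = sInf ((fun s ↦ ⟪𝒢.range.compress U.starProjection s, s⟫) '' sphere 0 1) := by
        simp_rw [cosAngle_sq, inner_compress_starProjection_self]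
    _ = sInf (spectrum ℝ (𝒢.range.compress U.starProjection)) :=
        ((𝒢.range.isSymmetric_compress U.starProjection_isSymmetric)
          |>.sInf_spectrum_eq_sInf_inner_self).symm
    _ = _ := congrArg sInf
        (ContinuousLinearMap.spectrum_comp_adjoint_comp_eq_spectrum_compress hGinv₁ _).symm

/-- For finite sequences `{u_j}_{j=1}^n` and linearly independent `{g_k}_{k=1}^m` with
synthesis operators `𝒰, 𝒢`, `U = span{u_j}`, `G = span{g_k}`, one has
`cos²(φ_{GU}) = λ_min((𝒢*𝒢)⁻¹ 𝒢* 𝒰𝒰† 𝒢)` (the smallest point of the spectrum), where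
`𝒰𝒰† = P_U` is the orthogonal projection onto `U`. -/
theorem stmt19 {H : Type*} [NormedAddCommGroup H] [InnerProductSpace ℝ H] [CompleteSpace H]
    {n m : ℕ} (u : Fin n → H) (g : Fin m → H) (hg : LinearIndependent ℝ g)
    (𝒰 : EuclideanSpace ℝ (Fin n) →L[ℝ] H) (𝒢 : EuclideanSpace ℝ (Fin m) →L[ℝ] H)
    (h𝒰 : ∀ c, 𝒰 c = ∑ j, c j • u j) (h𝒢 : ∀ c, 𝒢 c = ∑ k, c k • g k)
    (U G : Submodule ℝ H) [CompleteSpace U] [CompleteSpace G]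
    (hU : U = Submodule.span ℝ (Set.range u)) (hG : G = Submodule.span ℝ (Set.range g))
    -- `(𝒢*𝒢)⁻¹`:
    (Ginv : EuclideanSpace ℝ (Fin m) →L[ℝ] EuclideanSpace ℝ (Fin m))
    (hGinv₁ : Ginv.comp (𝒢.adjoint.comp 𝒢) = ContinuousLinearMap.id ℝ _)
    (hGinv₂ : (𝒢.adjoint.comp 𝒢).comp Ginv = ContinuousLinearMap.id ℝ _) :
    cosAngle G U ^ 2 =
      sInf (spectrum ℝ (Ginv.comp (𝒢.adjoint.comp
        ((U.subtypeL.comp (orthogonalProjection U)).comp 𝒢)))) :=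
  stmt19_general g 𝒢 h𝒢 U G hG Ginv hGinv₁
end
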